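/- Under the assumptions of the previous bound, condition D'(u_n) holds: if U_n are measurable sets with n·μ(U_n) → τ and (k_n) is any sequence of integers with k_n → ∞, then n · Σ_{j=1}^{⌊n/k_n⌋} P({x ∈ U_n and f_ω^j(x) ∈ U_n}) → 0 as n → ∞. -/
import Mathlib


open MeasureTheory Filter

/-- Condition `D'(uₙ)` holds: if `n·μ(Uₙ) → τ`, the annealed return probabilities
satisfy the quadratic bound `P(x ∈ Uₙ, f_ω^j x ∈ Uₙ) ≤ c·μ(Uₙ)²` uniformly in
`j ≥ 1`, and `kₙ → ∞`, then `n · Σ_{j=1}^{⌊n/kₙ⌋} P(x ∈ Uₙ, f_ω^j x ∈ Uₙ) → 0`. -/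
theorem condition_D_prime
    {M Ω : Type*} [MeasurableSpace M] [MeasurableSpace Ω]
    (μ : Measure M) [IsProbabilityMeasure μ]
    (θN : Measure Ω) [IsProbabilityMeasure θN]
    (F : ℕ → Ω → M → M)
    (Useq : ℕ → Set M) (hU : ∀ n, MeasurableSet (Useq n))
    (τ : ℝ) (hτ : 0 < τ)
    (hlim : Tendsto (fun n : ℕ => (n : ℝ) * (μ (Useq n)).toReal) atTop (nhds τ))
    (c : ℝ) (hc : 0 < c)
    (hbound : ∀ n : ℕ, ∀ j : ℕ, 1 ≤ j →
      ((μ.prod θN) {z : M × Ω | z.1 ∈ Useq n ∧ F j z.2 z.1 ∈ Useq n}).toReal ≤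
        c * (μ (Useq n)).toReal ^ 2)
    (k : ℕ → ℕ) (hk : Tendsto k atTop atTop) :
    Tendsto (fun n : ℕ => (n : ℝ) *
        ∑ j ∈ Finset.Icc 1 (n / k n),
          ((μ.prod θN) {z : M × Ω | z.1 ∈ Useq n ∧ F j z.2 z.1 ∈ Useq n}).toReal)
      atTop (nhds 0) := by
  have hg : Tendsto (fun n : ℕ => c * ((n : ℝ) * (μ (Useq n)).toReal) ^ 2 * (1 / (k n : ℝ)))
      atTop (nhds 0) := by
    have h1 : Tendsto (fun n : ℕ => (1 : ℝ) / (k n : ℝ)) atTop (nhds 0) :=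
      tendsto_one_div_atTop_nhds_zero_nat.comp hk
    have := ((tendsto_const_nhds (x := c)).mul (hlim.pow 2)).mul h1
    simpa using this
  apply squeeze_zero' ?_ ?_ hg
  · filter_upwards with n
    exact mul_nonneg (Nat.cast_nonneg n)
      (Finset.sum_nonneg fun j _ => ENNReal.toReal_nonneg)
  · filter_upwards [hk.eventually_ge_atTop 1] with n hkn
    have hk0 : (0 : ℝ) < (k n : ℝ) := by exact_mod_cast hkn
    have hsum : ∑ j ∈ Finset.Icc 1 (n / k n),
        ((μ.prod θN) {z : M × Ω | z.1 ∈ Useq n ∧ F j z.2 z.1 ∈ Useq n}).toReal ≤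
        ((n / k n : ℕ) : ℝ) * (c * (μ (Useq n)).toReal ^ 2) := by
      calc ∑ j ∈ Finset.Icc 1 (n / k n),
            ((μ.prod θN) {z : M × Ω | z.1 ∈ Useq n ∧ F j z.2 z.1 ∈ Useq n}).toReal
          ≤ ∑ _j ∈ Finset.Icc 1 (n / k n), c * (μ (Useq n)).toReal ^ 2 :=
            Finset.sum_le_sum fun j hj => hbound n j (Finset.mem_Icc.mp hj).1
        _ = ((n / k n : ℕ) : ℝ) * (c * (μ (Useq n)).toReal ^ 2) := by
            rw [Finset.sum_const, Nat.card_Icc]; simp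
    have hdiv : ((n / k n : ℕ) : ℝ) ≤ (n : ℝ) / (k n : ℝ) := Nat.cast_div_le
    have hμ2 : 0 ≤ c * (μ (Useq n)).toReal ^ 2 :=
      mul_nonneg hc.le (sq_nonneg _)
    calc (n : ℝ) * ∑ j ∈ Finset.Icc 1 (n / k n),
          ((μ.prod θN) {z : M × Ω | z.1 ∈ Useq n ∧ F j z.2 z.1 ∈ Useq n}).toReal
        ≤ (n : ℝ) * (((n / k n : ℕ) : ℝ) * (c * (μ (Useq n)).toReal ^ 2)) :=
          mul_le_mul_of_nonneg_left hsum (Nat.cast_nonneg n)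
      _ ≤ (n : ℝ) * (((n : ℝ) / (k n : ℝ)) * (c * (μ (Useq n)).toReal ^ 2)) := by
          gcongr
      _ = c * ((n : ℝ) * (μ (Useq n)).toReal) ^ 2 * (1 / (k n : ℝ)) := by ring
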